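/- arXiv:2210.06139 — 6 statements merged into one kernel-verified Lean document; each statement's English description precedes it below -/
import Mathlib

section
/- Let μ and ν be Borel probability measures on ℝ concentrated on (0, ∞), with cumulative distribution functions B(t) = μ((-∞, t]) and D(t) = ν((-∞, t]) respectively. Suppose D(t) ≤ B(t) for all t > 0 (i.e., ν first-order stochastically dominates μ), that there exists t₀ > 0 with D(t₀) < B(t₀), and that ∫ (1/t) dμ(t) < ∞. Then ∫ (1/t) dν(t) < ∫ (1/t) dμ(t); that is, the expected reciprocal under the stochastically dominant distribution is strictly smaller. -/
open MeasureTheory Set Filter Topology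

/-!
By the layer-cake formula, `∫ 1/t dρ = ∫_{s > 0} ρ{t | s ≤ 1/t} ds = ∫_{s > 0} F_ρ(1/s) ds`
for a measure `ρ` concentrated on `(0, ∞)` with CDF `F_ρ`. Dominance `D ≤ B` compares the
integrands pointwise, and right-continuity of `D` at `t₀` makes `D < B` on a whole interval
`[t₀, t₁]`, i.e. on a set of `s` of positive length, so the comparison is strict.
-/

lemma measure_Iic_zero_eq_zero_of_measure_Ioi_eq_one {ρ : Measure ℝ}
    [IsProbabilityMeasure ρ] (hρ : ρ (Ioi 0) = 1) : ρ (Iic 0) = 0 := by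
  rwa [← compl_Ioi, prob_compl_eq_zero_iff measurableSet_Ioi]

lemma setOf_le_one_div_eq {s : ℝ} (hs : 0 < s) :
    {a : ℝ | s ≤ 1 / a} = Iic s⁻¹ ∩ Ioi 0 := by
  ext a
  simp only [mem_ofPred_eq, mem_inter_iff, mem_Iic, mem_Ioi, one_div]
  constructor
  · intro h
    have ha : 0 < a := inv_pos.mp (hs.trans_le h)
    exact ⟨(le_inv_comm₀ hs ha).mp h, ha⟩
  · rintro ⟨h, ha⟩
    exact (le_inv_comm₀ hs ha).mpr h

lemma lintegral_ofReal_one_div_eq {ρ : Measure ℝ} (hρ : ρ (Iic 0) = 0) :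
    ∫⁻ t, ENNReal.ofReal (1 / t) ∂ρ = ∫⁻ s in Ioi 0, ρ (Iic s⁻¹) := by
  have hpos : ∀ᵐ t ∂ρ, 0 < t := by
    rw [ae_iff]
    simp only [not_lt]
    exact hρ
  rw [lintegral_eq_lintegral_meas_le ρ (hpos.mono fun t ht => (one_div_pos.mpr ht).le)
    (measurable_const.div measurable_id).aemeasurable]
  refine setLIntegral_congr_fun measurableSet_Ioi fun s hs => ?_
  rw [setOf_le_one_div_eq hs, measure_inter_conull (by rwa [compl_Ioi])]

lemma measurable_measure_Iic_inv (ρ : Measure ℝ) : Measurable fun s : ℝ => ρ (Iic s⁻¹) :=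
  (Monotone.measurable fun _ _ h => measure_mono (Iic_subset_Iic.mpr h)).comp measurable_inv

lemma tendsto_measure_Iic_nhdsGT (ρ : Measure ℝ) [IsFiniteMeasure ρ] (t : ℝ) :
    Tendsto (fun s => ρ (Iic s)) (𝓝[>] t) (𝓝 (ρ (Iic t))) := by
  have hinter : ⋂ r > t, Iic r = Iic t := by
    ext a
    simp only [mem_iInter, mem_Iic]
    exact ⟨fun h => le_of_forall_gt_imp_ge_of_dense h, fun h r hr => h.trans hr.le⟩
  rw [← hinter]
  exact tendsto_measure_biInter_gt (fun _ _ => measurableSet_Iic.nullMeasurableSet)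
    (fun _ _ _ hij => Iic_subset_Iic.mpr hij) ⟨t + 1, lt_add_one t, measure_ne_top ρ _⟩

lemma exists_gt_measure_Iic_lt {ρ : Measure ℝ} [IsFiniteMeasure ρ] {t : ℝ} {c : ENNReal}
    (h : ρ (Iic t) < c) : ∃ t' > t, ρ (Iic t') < c :=
  (((tendsto_measure_Iic_nhdsGT ρ t).eventually (gt_mem_nhds h)).and
    self_mem_nhdsWithin).exists.imp fun _ h => ⟨h.2, h.1⟩

/-- If `ν` (CDF `D`) first-order stochastically dominates `μ` (CDF `B`)
on `(0, ∞)`, i.e. `D t ≤ B t` for all `t > 0` with strict inequality at some `t₀ > 0`,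
both measures being concentrated on `(0, ∞)`, and `∫ (1/t) dμ < ∞`, then
`∫ (1/t) dν < ∫ (1/t) dμ`: the expected reciprocal is strictly smaller under the
stochastically dominant distribution. -/
theorem expected_reciprocal_lt_of_fsd
    (μ ν : Measure ℝ) [IsProbabilityMeasure μ] [IsProbabilityMeasure ν]
    (hμ : μ (Set.Ioi (0 : ℝ)) = 1) (hν : ν (Set.Ioi (0 : ℝ)) = 1)
    (hle : ∀ t > (0 : ℝ), ν (Set.Iic t) ≤ μ (Set.Iic t))
    (hstrict : ∃ t₀ > (0 : ℝ), ν (Set.Iic t₀) < μ (Set.Iic t₀))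
    (hfin : ∫⁻ t, ENNReal.ofReal (1 / t) ∂μ < ⊤) :
    ∫⁻ t, ENNReal.ofReal (1 / t) ∂ν < ∫⁻ t, ENNReal.ofReal (1 / t) ∂μ := by
  rw [lintegral_ofReal_one_div_eq (measure_Iic_zero_eq_zero_of_measure_Ioi_eq_one hμ)]
    at hfin ⊢
  rw [lintegral_ofReal_one_div_eq (measure_Iic_zero_eq_zero_of_measure_Ioi_eq_one hν)]
  have h_le : ∀ᵐ s ∂volume.restrict (Ioi 0), ν (Iic s⁻¹) ≤ μ (Iic s⁻¹) :=
    (ae_restrict_iff' measurableSet_Ioi).mpr <| .of_forall fun s hs => hle _ (inv_pos.mpr hs)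
  obtain ⟨t₀, ht₀, hst⟩ := hstrict
  obtain ⟨t₁, ht₀₁, ht₁⟩ := exists_gt_measure_Iic_lt hst
  have ht₁pos : 0 < t₁ := ht₀.trans ht₀₁
  refine lintegral_strict_mono_of_ae_le_of_ae_lt_on (s := Ioo t₁⁻¹ t₀⁻¹)
    (measurable_measure_Iic_inv μ).aemeasurable
    ((lintegral_mono_ae h_le).trans_lt hfin).ne h_le ?_ ?_
  · rw [Measure.restrict_apply' measurableSet_Ioi,
      inter_eq_self_of_subset_left (show Ioo t₁⁻¹ t₀⁻¹ ⊆ Ioi 0 from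
        fun s hs => (inv_pos.mpr ht₁pos).trans hs.1),
      Real.volume_Ioo, ne_eq, ENNReal.ofReal_eq_zero, not_le, sub_pos]
    exact inv_strictAnti₀ ht₀ ht₀₁
  · refine .of_forall fun s ⟨hs₁, hs₀⟩ => ?_
    have hs : 0 < s := (inv_pos.mpr ht₁pos).trans hs₁
    calc ν (Iic s⁻¹) ≤ ν (Iic t₁) :=
          measure_mono (Iic_subset_Iic.mpr (inv_le_of_inv_le₀ ht₁pos hs₁.le))
      _ < μ (Iic t₀) := ht₁
      _ ≤ μ (Iic s⁻¹) :=
          measure_mono (Iic_subset_Iic.mpr (le_inv_of_le_inv₀ hs hs₀.le))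
end

section
/- For each i ∈ {1,…,n} let X_i and Y_i be nonnegative real random variables, with the family (X_1,…,X_n) mutually independent and the family (Y_1,…,Y_n) mutually independent. Suppose that for every i and every x ≥ 0, F_{X_i}(x) ≤ F_{Y_i}(x), where F denotes the cumulative distribution function. Then the n-period products satisfy F_{X_1 X_2 ⋯ X_n}(x) ≤ F_{Y_1 Y_2 ⋯ Y_n}(x) for all x ≥ 0; that is, first-order stochastic dominance in every period is sufficient for first-order stochastic dominance of the multi-period (product) returns. -/
open MeasureTheory ProbabilityTheory Set Filter

/-!
By independence the joint law of `(S, T)` is the product of the marginal laws, so Fubini gives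
`P(S T ≤ x) = E[F_T(x / S)]` on `{S > 0}` (and the integrand is `1` on `{S = 0}`, as `x ≥ 0`).
Hence `P(S T ≤ x)` increases when `F_T` is replaced by a larger CDF, and, integrating in the
other order, when `F_S` is. Two such swaps handle one extra factor; induction over the factors
does the rest.
-/

lemma measure_univ_le_of_forall_measure_Iic_le {μ ν : Measure ℝ}
    (h : ∀ x, 0 ≤ x → μ (Iic x) ≤ ν (Iic x)) : μ univ ≤ ν univ :=
  le_of_tendsto_of_tendsto (tendsto_measure_Iic_atTop μ) (tendsto_measure_Iic_atTop ν)
    ((eventually_ge_atTop 0).mono h)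

lemma measure_setOf_mul_le_le_of_forall_measure_Iic_le {μ ν : Measure ℝ}
    (h : ∀ x, 0 ≤ x → μ (Iic x) ≤ ν (Iic x)) {s x : ℝ} (hs : 0 ≤ s) (hx : 0 ≤ x) :
    μ {t | s * t ≤ x} ≤ ν {t | s * t ≤ x} := by
  rcases hs.eq_or_lt with rfl | hs
  · simpa [hx] using measure_univ_le_of_forall_measure_Iic_le h
  · have hsection : {t | s * t ≤ x} = Iic (x / s) := by
      ext t; simp [le_div_iff₀ hs, mul_comm]
    rw [hsection]
    exact h _ (div_nonneg hx hs.le)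

lemma measurableSet_setOf_mul_le (x : ℝ) : MeasurableSet {p : ℝ × ℝ | p.1 * p.2 ≤ x} :=
  measurableSet_le (measurable_fst.mul measurable_snd) measurable_const

lemma prod_setOf_mul_le_le_of_forall_measure_Iic_le {μ μ' ν ν' : Measure ℝ}
    [SFinite μ] [SFinite μ'] [SFinite ν] [SFinite ν'] (hμ : ∀ᵐ s ∂μ, 0 ≤ s) (hν' : ∀ᵐ t ∂ν', 0 ≤ t)
    (hμμ' : ∀ x, 0 ≤ x → μ (Iic x) ≤ μ' (Iic x)) (hνν' : ∀ x, 0 ≤ x → ν (Iic x) ≤ ν' (Iic x))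
    {x : ℝ} (hx : 0 ≤ x) :
    μ.prod ν {p | p.1 * p.2 ≤ x} ≤ μ'.prod ν' {p | p.1 * p.2 ≤ x} := by
  have hmeas := measurableSet_setOf_mul_le x
  calc μ.prod ν {p | p.1 * p.2 ≤ x}
      ≤ μ.prod ν' {p | p.1 * p.2 ≤ x} := by
        rw [Measure.prod_apply hmeas, Measure.prod_apply hmeas]
        refine lintegral_mono_ae ?_
        filter_upwards [hμ] with s hs
        exact measure_setOf_mul_le_le_of_forall_measure_Iic_le hνν' hs hx
    _ ≤ μ'.prod ν' {p | p.1 * p.2 ≤ x} := by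
        rw [Measure.prod_apply_symm hmeas, Measure.prod_apply_symm hmeas]
        refine lintegral_mono_ae ?_
        filter_upwards [hν'] with t ht
        have hsection := measure_setOf_mul_le_le_of_forall_measure_Iic_le hμμ' ht hx
        simp only [mul_comm t] at hsection
        exact hsection

section

variable {Ω : Type*} [MeasurableSpace Ω] {P : Measure Ω}

lemma map_apply_Iic {U : Ω → ℝ} (hU : AEMeasurable U P) (x : ℝ) :
    P.map U (Iic x) = P {ω | U ω ≤ x} :=
  Measure.map_apply_of_aemeasurable hU measurableSet_Iic

variable [IsFiniteMeasure P]

lemma measure_setOf_mul_le_eq_prod_map {U V : Ω → ℝ} (hU : AEMeasurable U P)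
    (hV : AEMeasurable V P) (hUV : IndepFun U V P) (x : ℝ) :
    P {ω | U ω * V ω ≤ x} = (P.map U).prod (P.map V) {p | p.1 * p.2 ≤ x} := by
  rw [← hUV.map_prod_eq_prod_map_map hU hV,
    Measure.map_apply_of_aemeasurable (hU.prodMk hV) (measurableSet_setOf_mul_le x)]
  rfl

lemma measure_setOf_mul_le_le_of_indepFun {S T S' T' : Ω → ℝ} (hS : AEMeasurable S P)
    (hT : AEMeasurable T P) (hS' : AEMeasurable S' P) (hT' : AEMeasurable T' P)
    (hS_nonneg : ∀ᵐ ω ∂P, 0 ≤ S ω) (hT'_nonneg : ∀ᵐ ω ∂P, 0 ≤ T' ω)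
    (hST : IndepFun S T P) (hST' : IndepFun S' T' P)
    (hSS' : ∀ x, 0 ≤ x → P {ω | S ω ≤ x} ≤ P {ω | S' ω ≤ x})
    (hTT' : ∀ x, 0 ≤ x → P {ω | T ω ≤ x} ≤ P {ω | T' ω ≤ x}) {x : ℝ} (hx : 0 ≤ x) :
    P {ω | S ω * T ω ≤ x} ≤ P {ω | S' ω * T' ω ≤ x} := by
  rw [measure_setOf_mul_le_eq_prod_map hS hT hST, measure_setOf_mul_le_eq_prod_map hS' hT' hST']
  refine prod_setOf_mul_le_le_of_forall_measure_Iic_le ?_ ?_ ?_ ?_ hx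
  · exact (ae_map_iff hS measurableSet_Ici).2 hS_nonneg
  · exact (ae_map_iff hT' measurableSet_Ici).2 hT'_nonneg
  · simpa only [map_apply_Iic hS, map_apply_Iic hS'] using hSS'
  · simpa only [map_apply_Iic hT, map_apply_Iic hT'] using hTT'

lemma measure_setOf_prod_le_le_of_iIndepFun {ι : Type*} {X Y : ι → Ω → ℝ}
    (hX : ∀ i, Measurable (X i)) (hY : ∀ i, Measurable (Y i))
    (hX_nonneg : ∀ i ω, 0 ≤ X i ω) (hY_nonneg : ∀ i ω, 0 ≤ Y i ω)
    (hX_indep : iIndepFun X P) (hY_indep : iIndepFun Y P)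
    (hXY : ∀ i x, 0 ≤ x → P {ω | X i ω ≤ x} ≤ P {ω | Y i ω ≤ x}) (s : Finset ι)
    {x : ℝ} (hx : 0 ≤ x) :
    P {ω | ∏ i ∈ s, X i ω ≤ x} ≤ P {ω | ∏ i ∈ s, Y i ω ≤ x} := by
  classical
  induction s using Finset.induction_on generalizing x with
  | empty => rfl
  | @insert i s hi ih =>
    have hX_indep_prod := hX_indep.indepFun_finsetProd_of_notMem hX hi
    have hY_indep_prod := hY_indep.indepFun_finsetProd_of_notMem hY hi
    rw [Finset.prod_fn] at hX_indep_prod hY_indep_prod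
    simp only [Finset.prod_insert hi, mul_comm (X i _), mul_comm (Y i _)]
    exact measure_setOf_mul_le_le_of_indepFun
      (Finset.measurable_prod s fun j _ => hX j).aemeasurable (hX i).aemeasurable
      (Finset.measurable_prod s fun j _ => hY j).aemeasurable (hY i).aemeasurable
      (ae_of_all _ fun ω => Finset.prod_nonneg fun j _ => hX_nonneg j ω)
      (ae_of_all _ (hY_nonneg i)) hX_indep_prod hY_indep_prod (fun _ => ih) (hXY i) hx

end

/-- If, in each period `i`, the nonnegative return `X i` first-order
stochastically dominates `Y i`, and each family is mutually independent, then the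
`n`-period product return `∏ i, X i` first-order stochastically dominates
`∏ i, Y i`. -/
theorem fsd_of_products_of_fsd_each_period
    {Ω : Type*} [MeasurableSpace Ω] (P : Measure Ω) [IsProbabilityMeasure P]
    (n : ℕ) (X Y : Fin n → Ω → ℝ)
    (hX : ∀ i, Measurable (X i)) (hY : ∀ i, Measurable (Y i))
    (hXnn : ∀ i ω, 0 ≤ X i ω) (hYnn : ∀ i ω, 0 ≤ Y i ω)
    (hXindep : iIndepFun X P)
    (hYindep : iIndepFun Y P)
    (hfsd : ∀ i, ∀ x : ℝ, 0 ≤ x → P {ω | X i ω ≤ x} ≤ P {ω | Y i ω ≤ x}) :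
    ∀ x : ℝ, 0 ≤ x →
      P {ω | ∏ i, X i ω ≤ x} ≤ P {ω | ∏ i, Y i ω ≤ x} :=
  fun _ hx =>
    measure_setOf_prod_le_le_of_iIndepFun hX hY hXnn hYnn hXindep hYindep hfsd Finset.univ hx
end

section
/- For each i ∈ {1,…,n} let X_i and Y_i be nonnegative integrable real random variables, with the family (X_1,…,X_n) mutually independent and the family (Y_1,…,Y_n) mutually independent. Suppose that for every i and every x ≥ 0, ∫_0^x (F_{Y_i}(t) − F_{X_i}(t)) dt ≥ 0, where F denotes the cumulative distribution function. Then for every nondecreasing concave function u : [0,∞) → ℝ such that u(X_1⋯X_n) and u(Y_1⋯Y_n) are integrable, E[u(X_1 X_2 ⋯ X_n)] ≥ E[u(Y_1 Y_2 ⋯ Y_n)]; that is, second-order stochastic dominance in every period is sufficient for second-order stochastic dominance of the multi-period (product) returns. -/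
/-!
Let `u` be nondecreasing and concave on `[0, ∞)`, with right derivative `φ ≥ 0` (nonincreasing)
and right limit `u(0+)` at `0`. For a law `μ` on `[0, ∞)`, the layer-cake formula gives
`E[u] - u 0 = (u(0+) - u 0) μ(0, ∞) + ∫_0^∞ φ(t) μ(t, ∞) dt`.
Writing `φ` once more as a layer cake, the last integral is a superposition of the tail integrals
`∫_(0, c] μ(t, ∞) dt`, which are exactly what the integrated-CDF condition compares; the atom at `0`
is compared by right continuity of the CDF. Hence one period's CDF condition gives the utility
form of dominance. That form passes to products of independent factors: the law of a product is
the multiplicative convolution of the laws, and `y ↦ u (x * y)` is again a nondecreasing concave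
utility for `x ≥ 0`, so by Fubini the factors can be exchanged one at a time.
-/

open MeasureTheory ProbabilityTheory Set Function

structure IsNonnegIntegrable (μ : Measure ℝ) : Prop where
  ae_nonneg : ∀ᵐ x ∂μ, 0 ≤ x
  integrable : Integrable id μ

/-- Utility form of second-order stochastic dominance. For laws satisfying `IsNonnegIntegrable`
every such `u` is integrable, so no junk value of `∫` enters. -/
def SecondOrderDominates (μ ν : Measure ℝ) : Prop :=
  ∀ u : ℝ → ℝ, Monotone u → ConcaveOn ℝ (Ici 0) u → ∫ x, u x ∂ν ≤ ∫ x, u x ∂μ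

section RightDeriv

variable {S : Set ℝ} {f : ℝ → ℝ} {x : ℝ}

lemma ConcaveOn.hasDerivWithinAt_rightDeriv_of_mem_interior (hf : ConcaveOn ℝ S f)
    (hx : x ∈ interior S) : HasDerivWithinAt f (derivWithin f (Ioi x) x) (Ioi x) x := by
  have h := (hf.neg.differentiableWithinAt_Ioi_of_mem_interior hx).neg
  rw [neg_neg] at h
  exact h.hasDerivWithinAt

lemma ConcaveOn.antitoneOn_rightDeriv (hf : ConcaveOn ℝ S f) :
    AntitoneOn (fun x ↦ derivWithin f (Ioi x) x) (interior S) := by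
  intro a ha b hb hab
  simpa [derivWithin.neg] using hf.neg.monotoneOn_rightDeriv ha hb hab

end RightDeriv

section Utility

variable {u : ℝ → ℝ}

lemma le_add_mul_of_monotone_of_concaveOn (hu : Monotone u) (huc : ConcaveOn ℝ (Ici 0) u)
    {x : ℝ} (hx : 0 ≤ x) : u x ≤ u 1 + (u 1 - u 0) * x := by
  have h01 : 0 ≤ u 1 - u 0 := sub_nonneg.2 (hu zero_le_one)
  rcases le_or_gt x 1 with hx1 | hx1
  · nlinarith [hu hx1]
  · have h := huc.slope_anti_adjacent (x := 0) (y := 1) (z := x) self_mem_Ici hx zero_lt_one hx1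
    rw [sub_zero, div_one, div_le_iff₀ (by linarith)] at h
    nlinarith

lemma integrable_of_monotone_of_concaveOn {μ : Measure ℝ} [IsFiniteMeasure μ]
    (hμ0 : ∀ᵐ x ∂μ, 0 ≤ x) (hμ : Integrable id μ) (hu : Monotone u)
    (huc : ConcaveOn ℝ (Ici 0) u) : Integrable u μ := by
  refine ((integrable_const (|u 0| + |u 1|)).add (hμ.const_mul (u 1 - u 0))).mono'
    hu.measurable.aestronglyMeasurable ?_
  filter_upwards [hμ0] with x hx
  have := le_add_mul_of_monotone_of_concaveOn hu huc hx
  have := hu hx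
  rw [Real.norm_eq_abs, abs_le]
  constructor <;> simp only [Pi.add_apply, id] <;>
    nlinarith [abs_nonneg (u 0), abs_nonneg (u 1), le_abs_self (u 1), neg_abs_le (u 0),
      mul_nonneg (sub_nonneg.2 (hu zero_le_one)) hx]

-- `max (u t) (u(0+))` agrees with `u` on `(0, ∞)` and removes the jump of `u` at `0`.
lemma continuousOn_max_rightLim (hu : Monotone u) (huc : ConcaveOn ℝ (Ici 0) u) :
    ContinuousOn (fun t ↦ max (u t) (rightLim u 0)) (Ici 0) := by
  intro t ht
  rcases (mem_Ici.1 ht).eq_or_lt with rfl | ht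
  · rw [← continuousWithinAt_Ioi_iff_Ici, ContinuousWithinAt,
      max_eq_right (hu.le_rightLim le_rfl)]
    simpa using (hu.tendsto_rightLim 0).max (tendsto_const_nhds (x := rightLim u 0))
  · have hcont : ContinuousAt u t :=
      huc.continuousOn_interior.continuousAt (isOpen_interior.mem_nhds (by rwa [interior_Ici]))
    exact ContinuousAt.continuousWithinAt (hcont.max continuousAt_const)

lemma hasDerivWithinAt_max_rightLim (hu : Monotone u) (huc : ConcaveOn ℝ (Ici 0) u) {t : ℝ}
    (ht : 0 < t) : HasDerivWithinAt (fun s ↦ max (u s) (rightLim u 0))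
      (derivWithin u (Ioi t) t) (Ioi t) t := by
  have hmax : ∀ s, 0 < s → max (u s) (rightLim u 0) = u s := fun s hs ↦
    max_eq_left (hu.rightLim_le hs)
  refine (huc.hasDerivWithinAt_rightDeriv_of_mem_interior
    (by rwa [interior_Ici])).congr_of_eventuallyEq ?_ (hmax t ht)
  filter_upwards [nhdsWithin_le_nhds (Ioi_mem_nhds ht)] with s hs using hmax s hs

lemma rightDeriv_nonneg (hu : Monotone u) (t : ℝ) : 0 ≤ derivWithin u (Ioi t) t :=
  (hu.monotoneOn _).derivWithin_nonneg

lemma intervalIntegrable_rightDeriv (hu : Monotone u) (huc : ConcaveOn ℝ (Ici 0) u) {x : ℝ}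
    (hx : 0 ≤ x) : IntervalIntegrable (fun t ↦ derivWithin u (Ioi t) t) volume 0 x :=
  (intervalIntegrable_iff_integrableOn_Ioc_of_le hx).2 <|
    intervalIntegral.integrableOn_deriv_right_of_nonneg
      ((continuousOn_max_rightLim hu huc).mono Icc_subset_Ici_self)
      (fun _ ht ↦ hasDerivWithinAt_max_rightLim hu huc ht.1) fun t _ ↦ rightDeriv_nonneg hu t

lemma integral_rightDeriv (hu : Monotone u) (huc : ConcaveOn ℝ (Ici 0) u) {x : ℝ} (hx : 0 < x) :
    ∫ t in 0..x, derivWithin u (Ioi t) t = u x - rightLim u 0 := by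
  rw [intervalIntegral.integral_eq_sub_of_hasDeriv_right_of_le hx.le
    ((continuousOn_max_rightLim hu huc).mono Icc_subset_Ici_self)
    (fun _ ht ↦ hasDerivWithinAt_max_rightLim hu huc ht.1)
    (intervalIntegrable_rightDeriv hu huc hx.le),
    max_eq_left (hu.rightLim_le hx), max_eq_right (hu.le_rightLim le_rfl)]

end Utility

section LayerCake

variable {ρ₁ ρ₂ : Measure ℝ} [NullSingletonClass ρ₂]

lemma measure_le_of_forall_measure_Ioc_le (h : ∀ c, ρ₁ (Ioc 0 c) ≤ ρ₂ (Ioc 0 c)) {S : Set ℝ}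
    (hS : S ⊆ Ioi 0) (hdown : ∀ t ∈ S, Ioc 0 t ⊆ S) : ρ₁ S ≤ ρ₂ S := by
  -- `S` is `∅`, `(0, c)`, `(0, c]` or `(0, ∞)`.
  by_cases hbdd : BddAbove S
  · rcases S.eq_empty_or_nonempty with rfl | hne
    · simp
    calc ρ₁ S ≤ ρ₁ (Ioc 0 (sSup S)) := measure_mono fun t ht ↦ ⟨hS ht, le_csSup hbdd ht⟩
      _ ≤ ρ₂ (Ioc 0 (sSup S)) := h _
      _ = ρ₂ (Ioo 0 (sSup S)) := measure_congr Ioo_ae_eq_Ioc.symm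
      _ ≤ ρ₂ S := measure_mono fun t ht ↦ by
        obtain ⟨b, hb, htb⟩ := exists_lt_of_lt_csSup hne ht.2
        exact hdown b hb ⟨ht.1, htb.le⟩
  · have hS' : S = ⋃ c, Ioc 0 c := by
      rw [iUnion_Ioc_right]
      refine hS.antisymm fun t ht ↦ ?_
      obtain ⟨b, hb, htb⟩ := not_bddAbove_iff.1 hbdd t
      exact hdown b hb ⟨ht, htb.le⟩
    have hmono : Monotone fun c : ℝ ↦ Ioc (0 : ℝ) c := fun _ _ h ↦ Ioc_subset_Ioc_right h
    rw [hS', hmono.measure_iUnion, hmono.measure_iUnion]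
    exact iSup_mono h

lemma setLIntegral_Ioi_le_of_antitoneOn (h : ∀ c, ρ₁ (Ioc 0 c) ≤ ρ₂ (Ioc 0 c)) {φ : ℝ → ℝ}
    (hφm : Measurable φ) (hφ : AntitoneOn φ (Ioi 0)) (hφ0 : 0 ≤ φ) :
    ∫⁻ t in Ioi 0, ENNReal.ofReal (φ t) ∂ρ₁ ≤ ∫⁻ t in Ioi 0, ENNReal.ofReal (φ t) ∂ρ₂ := by
  rw [lintegral_eq_lintegral_meas_lt _ (ae_of_all _ hφ0) hφm.aemeasurable,
    lintegral_eq_lintegral_meas_lt _ (ae_of_all _ hφ0) hφm.aemeasurable]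
  refine lintegral_mono fun s ↦ ?_
  rw [Measure.restrict_apply' measurableSet_Ioi, Measure.restrict_apply' measurableSet_Ioi]
  exact measure_le_of_forall_measure_Ioc_le h inter_subset_right
    fun t ht r hr ↦ ⟨ht.1.trans_le (hφ hr.1 ht.2 hr.2), hr.1⟩

end LayerCake

section Representation

variable {u : ℝ → ℝ}

lemma lintegral_ofReal_sub_eq_add_lintegral_tail {μ : Measure ℝ} (hμ0 : ∀ᵐ x ∂μ, 0 ≤ x)
    (hu : Monotone u) (huc : ConcaveOn ℝ (Ici 0) u) :
    ∫⁻ x, ENNReal.ofReal (u x - u 0) ∂μ = ENNReal.ofReal (rightLim u 0 - u 0) * μ (Ioi 0)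
      + ∫⁻ t in Ioi 0, μ (Ioi t) * ENNReal.ofReal (derivWithin u (Ioi t) t) := by
  have hpt : ∀ x, 0 ≤ x → ENNReal.ofReal (u x - u 0) = (Ioi 0).indicator
      (fun _ ↦ ENNReal.ofReal (rightLim u 0 - u 0)) x
        + ENNReal.ofReal (∫ t in 0..x, derivWithin u (Ioi t) t) := by
    intro x hx
    rcases hx.eq_or_lt with rfl | hx
    · simp
    rw [indicator_of_mem (show x ∈ Ioi 0 from hx), integral_rightDeriv hu huc hx,
      ← ENNReal.ofReal_add (sub_nonneg.2 (hu.le_rightLim le_rfl))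
        (sub_nonneg.2 (hu.rightLim_le hx))]
    ring_nf
  rw [lintegral_congr_ae (hμ0.mono hpt),
    lintegral_add_left (measurable_const.indicator measurableSet_Ioi),
    lintegral_indicator_const measurableSet_Ioi]
  congr 1
  exact lintegral_comp_eq_lintegral_meas_lt_mul μ (f := id) hμ0 aemeasurable_id
    (fun t ht ↦ intervalIntegrable_rightDeriv hu huc ht.le) (ae_of_all _ (rightDeriv_nonneg hu))

lemma ofReal_integral_sub_eq_lintegral {μ : Measure ℝ} [IsProbabilityMeasure μ]
    (hμ : IsNonnegIntegrable μ) (hu : Monotone u) (huc : ConcaveOn ℝ (Ici 0) u) :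
    ENNReal.ofReal (∫ x, u x ∂μ - u 0) = ∫⁻ x, ENNReal.ofReal (u x - u 0) ∂μ := by
  have hint := integrable_of_monotone_of_concaveOn hμ.ae_nonneg hμ.integrable hu huc
  rw [← ofReal_integral_eq_lintegral_ofReal (f := fun x ↦ u x - u 0)
    (hint.sub (integrable_const _)) (hμ.ae_nonneg.mono fun x hx ↦ sub_nonneg.2 (hu hx)),
    integral_sub hint (integrable_const _)]
  simp

end Representation

section CDF

lemma le_of_forall_integral_Icc_sub_nonneg {F G : ℝ → ℝ} {a : ℝ} (hF : Monotone F)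
    (hG : Monotone G) (hGa : ContinuousWithinAt G (Ici a) a)
    (h : ∀ x, a < x → 0 ≤ ∫ t in Icc a x, (G t - F t)) : F a ≤ G a := by
  by_contra! hlt
  set δ := (F a - G a) / 2 with hδ
  obtain ⟨c, hac, hc⟩ := mem_nhdsGE_iff_exists_Icc_subset.1
    (hGa.preimage_mem_nhdsWithin (Iio_mem_nhds (show G a < G a + δ by linarith)))
  have hbound : ∀ t ∈ Icc a c, G t - F t ≤ -δ := fun t ht ↦ by
    have hGt : G t < G a + δ := hc ht
    linarith [hF ht.1]
  have hint : IntegrableOn (fun t ↦ G t - F t) (Icc a c) :=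
    (hG.locallyIntegrable.integrableOn_isCompact isCompact_Icc).sub
      (hF.locallyIntegrable.integrableOn_isCompact isCompact_Icc)
  have := (h c hac).trans (setIntegral_mono_on hint (integrable_const _) measurableSet_Icc hbound)
  rw [setIntegral_const, measureReal_def, Real.volume_Icc, ENNReal.toReal_ofReal (by linarith),
    smul_eq_mul] at this
  nlinarith

lemma measure_Ioi_eq_ofReal_one_sub_cdf (μ : Measure ℝ) [IsProbabilityMeasure μ] (t : ℝ) :
    μ (Ioi t) = ENNReal.ofReal (1 - cdf μ t) := by
  rw [← compl_Iic, prob_compl_eq_one_sub measurableSet_Iic, cdf_eq_real, measureReal_def,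
    ENNReal.ofReal_sub _ ENNReal.toReal_nonneg, ENNReal.ofReal_one,
    ENNReal.ofReal_toReal (measure_ne_top _ _)]

variable {μ ν : Measure ℝ} [IsProbabilityMeasure μ] [IsProbabilityMeasure ν]

lemma measure_Ioi_zero_le_of_integral_cdf_sub_nonneg
    (h : ∀ x, 0 ≤ x → 0 ≤ ∫ t in Icc 0 x, (cdf ν t - cdf μ t)) : ν (Ioi 0) ≤ μ (Ioi 0) := by
  rw [measure_Ioi_eq_ofReal_one_sub_cdf, measure_Ioi_eq_ofReal_one_sub_cdf]
  exact ENNReal.ofReal_le_ofReal <| sub_le_sub_left (le_of_forall_integral_Icc_sub_nonneg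
    (cdf μ).mono (cdf ν).mono ((cdf ν).right_continuous 0) fun x hx ↦ h x hx.le) 1

lemma lintegral_Ioc_measure_Ioi_le_of_integral_cdf_sub_nonneg
    (h : ∀ x, 0 ≤ x → 0 ≤ ∫ t in Icc 0 x, (cdf ν t - cdf μ t)) (c : ℝ) :
    ∫⁻ t in Ioc 0 c, ν (Ioi t) ≤ ∫⁻ t in Ioc 0 c, μ (Ioi t) := by
  rcases le_total c 0 with hc | hc
  · simp [Ioc_eq_empty_of_le hc]
  have hint : ∀ (ρ : Measure ℝ) [IsProbabilityMeasure ρ],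
      IntegrableOn (fun t ↦ 1 - cdf ρ t) (Ioc 0 c) := fun ρ _ ↦
    (integrable_const 1).sub
      (((cdf ρ).mono.locallyIntegrable.integrableOn_isCompact isCompact_Icc).mono_set
        Ioc_subset_Icc_self)
  have hnonneg : ∀ (ρ : Measure ℝ) [IsProbabilityMeasure ρ],
      ∀ᵐ t ∂(volume.restrict (Ioc 0 c)), 0 ≤ 1 - cdf ρ t := fun ρ _ ↦
    ae_of_all _ fun t ↦ sub_nonneg.2 (cdf_le_one ρ t)
  simp_rw [measure_Ioi_eq_ofReal_one_sub_cdf]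
  rw [← ofReal_integral_eq_lintegral_ofReal (hint ν) (hnonneg ν),
    ← ofReal_integral_eq_lintegral_ofReal (hint μ) (hnonneg μ)]
  refine ENNReal.ofReal_le_ofReal (sub_nonneg.1 ?_)
  rw [← integral_sub (hint μ) (hint ν), ← integral_Icc_eq_integral_Ioc]
  simpa only [sub_sub_sub_cancel_left] using h c hc

end CDF

theorem secondOrderDominates_of_integral_cdf_sub_nonneg {μ ν : Measure ℝ}
    [IsProbabilityMeasure μ] [IsProbabilityMeasure ν] (hμ : IsNonnegIntegrable μ)
    (hν : IsNonnegIntegrable ν) (h : ∀ x, 0 ≤ x → 0 ≤ ∫ t in Icc 0 x, (cdf ν t - cdf μ t)) :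
    SecondOrderDominates μ ν := by
  intro u hu huc
  have hφm : Measurable fun t ↦ derivWithin u (Ioi t) t := measurable_derivWithin_Ioi u
  have htail : ∀ ρ : Measure ℝ, Measurable fun t ↦ ρ (Ioi t) := fun ρ ↦
    Antitone.measurable fun _ _ hst ↦ measure_mono (Ioi_subset_Ioi hst)
  have hdensity : ∫⁻ t in Ioi 0, ν (Ioi t) * ENNReal.ofReal (derivWithin u (Ioi t) t)
      ≤ ∫⁻ t in Ioi 0, μ (Ioi t) * ENNReal.ofReal (derivWithin u (Ioi t) t) := by
    have := setLIntegral_Ioi_le_of_antitoneOn (ρ₁ := volume.withDensity fun t ↦ ν (Ioi t))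
      (ρ₂ := volume.withDensity fun t ↦ μ (Ioi t))
      (fun c ↦ by simpa only [withDensity_apply _ measurableSet_Ioc] using
        lintegral_Ioc_measure_Ioi_le_of_integral_cdf_sub_nonneg h c)
      hφm (by simpa [interior_Ici] using huc.antitoneOn_rightDeriv) (rightDeriv_nonneg hu)
    simpa only [setLIntegral_withDensity_eq_setLIntegral_mul _ (htail _) hφm.ennreal_ofReal
      measurableSet_Ioi, Pi.mul_apply] using this
  have hcompare : ENNReal.ofReal (∫ x, u x ∂ν - u 0) ≤ ENNReal.ofReal (∫ x, u x ∂μ - u 0) := by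
    rw [ofReal_integral_sub_eq_lintegral hν hu huc, ofReal_integral_sub_eq_lintegral hμ hu huc,
      lintegral_ofReal_sub_eq_add_lintegral_tail hν.ae_nonneg hu huc,
      lintegral_ofReal_sub_eq_add_lintegral_tail hμ.ae_nonneg hu huc]
    exact add_le_add (by gcongr _ * ?_; exact measure_Ioi_zero_le_of_integral_cdf_sub_nonneg h)
      hdensity
  have hμu : u 0 ≤ ∫ x, u x ∂μ := by
    simpa using integral_mono_ae (integrable_const (u 0))
      (integrable_of_monotone_of_concaveOn hμ.ae_nonneg hμ.integrable hu huc)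
      (hμ.ae_nonneg.mono fun x hx ↦ hu hx)
  linarith [(ENNReal.ofReal_le_ofReal_iff (sub_nonneg.2 hμu)).1 hcompare]

section Products

lemma concaveOn_comp_mul_left {u : ℝ → ℝ} (huc : ConcaveOn ℝ (Ici 0) u) {a : ℝ} (ha : 0 ≤ a) :
    ConcaveOn ℝ (Ici 0) fun y ↦ u (a * y) :=
  (huc.comp_linearMap (LinearMap.mulLeft ℝ a)).subset (fun _ hy ↦ mul_nonneg ha hy) (convex_Ici 0)

lemma IsNonnegIntegrable.mconv {μ ν : Measure ℝ} [SFinite μ] [SFinite ν]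
    (hμ : IsNonnegIntegrable μ) (hν : IsNonnegIntegrable ν) : IsNonnegIntegrable (μ ∗ₘ ν) where
  ae_nonneg := by
    rw [Measure.mconv, ae_map_iff (by fun_prop) measurableSet_Ici]
    filter_upwards [Measure.quasiMeasurePreserving_fst.ae hμ.ae_nonneg,
      Measure.quasiMeasurePreserving_snd.ae hν.ae_nonneg] with p h₁ h₂ using mul_nonneg h₁ h₂
  integrable := by
    rw [Measure.mconv, integrable_map_measure aestronglyMeasurable_id (by fun_prop)]
    exact hμ.integrable.mul_prod hν.integrable

lemma Integrable.integral_comp_mul_of_mconv {μ ν : Measure ℝ} [SFinite μ] [SFinite ν]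
    {f : ℝ → ℝ} (hf : Integrable f (μ ∗ₘ ν)) : Integrable (fun x ↦ ∫ y, f (x * y) ∂ν) μ :=
  ((integrable_map_measure hf.1 (by fun_prop)).1 hf).integral_prod_left

namespace SecondOrderDominates

variable {μ ν ρ : Measure ℝ}

lemma refl (μ : Measure ℝ) : SecondOrderDominates μ μ := fun _ _ _ ↦ le_rfl

lemma trans (h₁ : SecondOrderDominates μ ν) (h₂ : SecondOrderDominates ν ρ) :
    SecondOrderDominates μ ρ := fun u hu huc ↦ (h₂ u hu huc).trans (h₁ u hu huc)

lemma mconv_left [IsFiniteMeasure μ] [IsFiniteMeasure ν] [IsFiniteMeasure ρ]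
    (hρ : IsNonnegIntegrable ρ) (hμ : IsNonnegIntegrable μ) (hν : IsNonnegIntegrable ν)
    (h : SecondOrderDominates μ ν) : SecondOrderDominates (ρ ∗ₘ μ) (ρ ∗ₘ ν) := by
  intro u hu huc
  have hint : ∀ σ : Measure ℝ, [IsFiniteMeasure σ] → IsNonnegIntegrable σ →
      Integrable u (ρ ∗ₘ σ) := fun σ _ hσ ↦
    integrable_of_monotone_of_concaveOn (hρ.mconv hσ).ae_nonneg (hρ.mconv hσ).integrable hu huc
  rw [integral_mconv (hint ν hν), integral_mconv (hint μ hμ)]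
  refine integral_mono_ae (Integrable.integral_comp_mul_of_mconv (hint ν hν))
    (Integrable.integral_comp_mul_of_mconv (hint μ hμ)) ?_
  filter_upwards [hρ.ae_nonneg] with x hx
  exact h _ (fun _ _ hab ↦ hu (mul_le_mul_of_nonneg_left hab hx)) (concaveOn_comp_mul_left huc hx)

lemma mconv {μ₁ ν₁ μ₂ ν₂ : Measure ℝ} [IsFiniteMeasure μ₁] [IsFiniteMeasure ν₁]
    [IsFiniteMeasure μ₂] [IsFiniteMeasure ν₂] (hμ₁ : IsNonnegIntegrable μ₁)
    (hν₁ : IsNonnegIntegrable ν₁) (hμ₂ : IsNonnegIntegrable μ₂) (hν₂ : IsNonnegIntegrable ν₂)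
    (h₁ : SecondOrderDominates μ₁ ν₁) (h₂ : SecondOrderDominates μ₂ ν₂) :
    SecondOrderDominates (μ₁ ∗ₘ μ₂) (ν₁ ∗ₘ ν₂) := by
  have h := h₁.mconv_left hμ₂ hμ₁ hν₁
  rw [Measure.mconv_comm μ₂ μ₁, Measure.mconv_comm μ₂ ν₁] at h
  exact h.trans (h₂.mconv_left hν₁ hμ₂ hν₂)

end SecondOrderDominates

variable {Ω ι : Type*} [MeasurableSpace Ω] {P : Measure Ω}

lemma isNonnegIntegrable_map {Z : Ω → ℝ} (hZ : Measurable Z) (hZ0 : ∀ ω, 0 ≤ Z ω)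
    (hZi : Integrable Z P) : IsNonnegIntegrable (P.map Z) where
  ae_nonneg := (ae_map_iff hZ.aemeasurable measurableSet_Ici).2 (ae_of_all _ hZ0)
  integrable := (integrable_map_measure aestronglyMeasurable_id hZ.aemeasurable).2 hZi

lemma cdf_map_eq_toReal [IsProbabilityMeasure P] {Z : Ω → ℝ} (hZ : Measurable Z) (t : ℝ) :
    cdf (P.map Z) t = (P {ω | Z ω ≤ t}).toReal := by
  have := Measure.isProbabilityMeasure_map (μ := P) hZ.aemeasurable
  rw [cdf_eq_real, map_measureReal_apply hZ measurableSet_Iic, measureReal_def]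
  rfl

variable [IsFiniteMeasure P] {X Y : ι → Ω → ℝ}

lemma ProbabilityTheory.iIndepFun.map_prod_insert [DecidableEq ι] (hind : iIndepFun X P)
    (hX : ∀ i, Measurable (X i)) {s : Finset ι} {i : ι} (hi : i ∉ s) :
    P.map (∏ j ∈ insert i s, X j) = P.map (X i) ∗ₘ P.map (∏ j ∈ s, X j) := by
  rw [Finset.prod_insert hi]
  exact (hind.indepFun_finsetProd_of_notMem hX hi).symm.map_mul_eq_map_mconv_map₀
    (hX i).aemeasurable (Finset.aemeasurable_prod s fun j _ ↦ (hX j).aemeasurable)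

lemma isNonnegIntegrable_map_prod (hind : iIndepFun X P) (hX : ∀ i, Measurable (X i))
    (hXl : ∀ i, IsNonnegIntegrable (P.map (X i))) (s : Finset ι) :
    IsNonnegIntegrable (P.map (∏ j ∈ s, X j)) := by
  classical
  induction s using Finset.induction_on with
  | empty =>
    rw [Finset.prod_empty]
    exact isNonnegIntegrable_map (Z := 1) measurable_const (fun _ ↦ zero_le_one)
      (integrable_const 1)
  | insert i s hi ih =>
    rw [hind.map_prod_insert hX hi]
    exact (hXl i).mconv ih

lemma secondOrderDominates_map_prod (hXind : iIndepFun X P) (hYind : iIndepFun Y P)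
    (hX : ∀ i, Measurable (X i)) (hY : ∀ i, Measurable (Y i))
    (hXl : ∀ i, IsNonnegIntegrable (P.map (X i))) (hYl : ∀ i, IsNonnegIntegrable (P.map (Y i)))
    (h : ∀ i, SecondOrderDominates (P.map (X i)) (P.map (Y i))) (s : Finset ι) :
    SecondOrderDominates (P.map (∏ j ∈ s, X j)) (P.map (∏ j ∈ s, Y j)) := by
  classical
  induction s using Finset.induction_on with
  | empty => simpa only [Finset.prod_empty] using SecondOrderDominates.refl (P.map 1)
  | insert i s hi ih =>
    rw [hXind.map_prod_insert hX hi, hYind.map_prod_insert hY hi]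
    exact (h i).mconv (hXl i) (hYl i) (isNonnegIntegrable_map_prod hXind hX hXl s)
      (isNonnegIntegrable_map_prod hYind hY hYl s) ih

end Products

theorem ssd_of_products_of_ssd_each_period_general
    {Ω : Type*} [MeasurableSpace Ω] (P : Measure Ω) [IsProbabilityMeasure P]
    (n : ℕ) (X Y : Fin n → Ω → ℝ)
    (hX : ∀ i, Measurable (X i)) (hY : ∀ i, Measurable (Y i))
    (hXnn : ∀ i ω, 0 ≤ X i ω) (hYnn : ∀ i ω, 0 ≤ Y i ω)
    (hXi : ∀ i, Integrable (X i) P) (hYi : ∀ i, Integrable (Y i) P)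
    (hXindep : iIndepFun X P)
    (hYindep : iIndepFun Y P)
    (hssd : ∀ i, ∀ x : ℝ, 0 ≤ x →
      0 ≤ ∫ t in Set.Icc 0 x,
        ((P {ω | Y i ω ≤ t}).toReal - (P {ω | X i ω ≤ t}).toReal))
    (u : ℝ → ℝ) (hu : MonotoneOn u (Set.Ici 0)) (huc : ConcaveOn ℝ (Set.Ici 0) u) :
    ∫ ω, u (∏ i, Y i ω) ∂P ≤ ∫ ω, u (∏ i, X i ω) ∂P := by
  have hXl i := isNonnegIntegrable_map (hX i) (hXnn i) (hXi i)
  have hYl i := isNonnegIntegrable_map (hY i) (hYnn i) (hYi i)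
  have hperiod i : SecondOrderDominates (P.map (X i)) (P.map (Y i)) := by
    have := Measure.isProbabilityMeasure_map (μ := P) (hX i).aemeasurable
    have := Measure.isProbabilityMeasure_map (μ := P) (hY i).aemeasurable
    refine secondOrderDominates_of_integral_cdf_sub_nonneg (hXl i) (hYl i) fun x hx ↦ ?_
    simpa only [cdf_map_eq_toReal (hX i), cdf_map_eq_toReal (hY i)] using hssd i x hx
  set U : ℝ → ℝ := fun t ↦ u (max t 0)
  have hUm : Monotone U := fun s t hst ↦
    hu (le_max_right s 0) (le_max_right t 0) (max_le_max hst le_rfl)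
  have hUc : ConcaveOn ℝ (Ici 0) U := huc.congr fun t ht ↦ by simp [U, max_eq_left ht.out]
  have hU (Z : Fin n → Ω → ℝ) (hZ : ∀ i ω, 0 ≤ Z i ω) (ω : Ω) :
      U ((∏ i, Z i) ω) = u (∏ i, Z i ω) := by
    simp [U, Finset.prod_nonneg fun i _ ↦ hZ i ω]
  have key := secondOrderDominates_map_prod hXindep hYindep hX hY hXl hYl hperiod Finset.univ
    U hUm hUc
  rwa [integral_map (by fun_prop) hUm.measurable.aestronglyMeasurable,
    integral_map (by fun_prop) hUm.measurable.aestronglyMeasurable, funext (hU X hXnn),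
    funext (hU Y hYnn)] at key

/-- If, in each period `i`, the nonnegative integrable return `X i`
second-order stochastically dominates `Y i` (`∫_0^x (F_{Y i} − F_{X i}) dt ≥ 0` for
all `x ≥ 0`), and each family is mutually independent, then for every nondecreasing
concave utility `u` on `[0, ∞)` making the composed products integrable,
`E[u(∏ i, X i)] ≥ E[u(∏ i, Y i)]`. -/
theorem ssd_of_products_of_ssd_each_period
    {Ω : Type*} [MeasurableSpace Ω] (P : Measure Ω) [IsProbabilityMeasure P]
    (n : ℕ) (X Y : Fin n → Ω → ℝ)
    (hX : ∀ i, Measurable (X i)) (hY : ∀ i, Measurable (Y i))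
    (hXnn : ∀ i ω, 0 ≤ X i ω) (hYnn : ∀ i ω, 0 ≤ Y i ω)
    (hXi : ∀ i, Integrable (X i) P) (hYi : ∀ i, Integrable (Y i) P)
    (hXindep : iIndepFun X P)
    (hYindep : iIndepFun Y P)
    (hssd : ∀ i, ∀ x : ℝ, 0 ≤ x →
      0 ≤ ∫ t in Set.Icc 0 x,
        ((P {ω | Y i ω ≤ t}).toReal - (P {ω | X i ω ≤ t}).toReal))
    (u : ℝ → ℝ) (hu : MonotoneOn u (Set.Ici 0)) (huc : ConcaveOn ℝ (Set.Ici 0) u)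
    (huX : Integrable (fun ω => u (∏ i, X i ω)) P)
    (huY : Integrable (fun ω => u (∏ i, Y i ω)) P) :
    ∫ ω, u (∏ i, Y i ω) ∂P ≤ ∫ ω, u (∏ i, X i ω) ∂P :=
  ssd_of_products_of_ssd_each_period_general P n X Y hX hY hXnn hYnn hXi hYi hXindep hYindep hssd u
    hu huc
end

section
/- Let X be an integrable real random variable with cumulative distribution function F_X and let θ ∈ ℝ with E[max(θ − X, 0)] > 0. Then the Omega ratio satisfies Ω_X(θ) = (∫_θ^∞ (1 − F_X(r)) dr) / (∫_{-∞}^θ F_X(r) dr) = (E[X] − θ)/E[max(θ − X, 0)] + 1. -/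
/-!
By Tonelli on `{(r, ω) | X ω ≤ r}`, the integral of the CDF over `r ≤ θ` is the expected
shortfall `E[(θ - X)₊]`, and the integral of the survival function over `r > θ` is
`E[(X - θ)₊]`. Their difference is `E[X] - θ`, so the Omega ratio is
`(E[X] - θ + E[(θ - X)₊]) / E[(θ - X)₊]`.
-/

open MeasureTheory Set

section TailIntegrals

variable {Ω : Type*} [MeasurableSpace Ω] (μ : Measure Ω) {X : Ω → ℝ}

lemma lintegral_Iic_measure_le [SFinite μ] (hX : Measurable X) (θ : ℝ) :
    ∫⁻ r in Iic θ, μ {ω | X ω ≤ r} = ∫⁻ ω, ENNReal.ofReal (θ - X ω) ∂μ := by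
  have hs : MeasurableSet {p : ℝ × Ω | X p.2 ≤ p.1} :=
    measurableSet_le (hX.comp measurable_snd) measurable_fst
  calc ∫⁻ r in Iic θ, μ {ω | X ω ≤ r}
      = (volume.restrict (Iic θ)).prod μ {p | X p.2 ≤ p.1} := (Measure.prod_apply hs).symm
    _ = ∫⁻ ω, volume.restrict (Iic θ) (Ici (X ω)) ∂μ := Measure.prod_apply_symm hs
    _ = ∫⁻ ω, ENNReal.ofReal (θ - X ω) ∂μ := lintegral_congr fun ω => by
        rw [Measure.restrict_apply measurableSet_Ici, Ici_inter_Iic, Real.volume_Icc]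

lemma lintegral_Ioi_measure_lt [SFinite μ] (hX : Measurable X) (θ : ℝ) :
    ∫⁻ r in Ioi θ, μ {ω | r < X ω} = ∫⁻ ω, ENNReal.ofReal (X ω - θ) ∂μ := by
  have hs : MeasurableSet {p : ℝ × Ω | p.1 < X p.2} :=
    measurableSet_lt measurable_fst (hX.comp measurable_snd)
  calc ∫⁻ r in Ioi θ, μ {ω | r < X ω}
      = (volume.restrict (Ioi θ)).prod μ {p | p.1 < X p.2} := (Measure.prod_apply hs).symm
    _ = ∫⁻ ω, volume.restrict (Ioi θ) (Iio (X ω)) ∂μ := Measure.prod_apply_symm hs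
    _ = ∫⁻ ω, ENNReal.ofReal (X ω - θ) ∂μ := lintegral_congr fun ω => by
        rw [Measure.restrict_apply measurableSet_Iio, Iio_inter_Ioi, Real.volume_Ioo]

-- No integrability is needed: if the `∫⁻` is `∞`, both sides are `0`.
lemma toReal_lintegral_ofReal_eq_integral_max {f : Ω → ℝ} (hf : AEStronglyMeasurable f μ) :
    (∫⁻ ω, ENNReal.ofReal (f ω) ∂μ).toReal = ∫ ω, max (f ω) 0 ∂μ := by
  rw [integral_eq_lintegral_of_nonneg_ae (f := fun ω => max (f ω) 0)
    (ae_of_all _ fun ω => le_max_right _ _) (by fun_prop)]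
  simp

lemma integral_Iic_measure_le_toReal [IsFiniteMeasure μ] (hX : Measurable X) (θ : ℝ) :
    ∫ r in Iic θ, (μ {ω | X ω ≤ r}).toReal = ∫ ω, max (θ - X ω) 0 ∂μ := by
  have hmono : Monotone fun r => μ {ω | X ω ≤ r} := fun _ _ hab =>
    measure_mono fun _ h => le_trans h hab
  rw [integral_toReal hmono.measurable.aemeasurable (ae_of_all _ fun _ => measure_lt_top μ _),
    lintegral_Iic_measure_le μ hX θ,
    toReal_lintegral_ofReal_eq_integral_max μ (by fun_prop)]

lemma integral_Ioi_one_sub_measure_le_toReal [IsProbabilityMeasure μ] (hX : Measurable X)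
    (θ : ℝ) :
    ∫ r in Ioi θ, (1 - (μ {ω | X ω ≤ r}).toReal) = ∫ ω, max (X ω - θ) 0 ∂μ := by
  have hcompl (r : ℝ) : 1 - (μ {ω | X ω ≤ r}).toReal = (μ {ω | r < X ω}).toReal := by
    have h := probReal_compl_eq_one_sub (μ := μ) (measurableSet_le hX (measurable_const (a := r)))
    simp only [measureReal_def, compl_ofPred, not_le] at h
    exact h.symm
  have hanti : Antitone fun r => μ {ω | r < X ω} := fun _ _ hab =>
    measure_mono fun _ h => lt_of_le_of_lt hab h
  simp_rw [hcompl]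
  rw [integral_toReal hanti.measurable.aemeasurable (ae_of_all _ fun _ => measure_lt_top μ _),
    lintegral_Ioi_measure_lt μ hX θ,
    toReal_lintegral_ofReal_eq_integral_max μ (by fun_prop)]

lemma integral_max_sub_integral_max_neg {f : Ω → ℝ} (hf : Integrable f μ) :
    ∫ ω, max (f ω) 0 ∂μ - ∫ ω, max (-f ω) 0 ∂μ = ∫ ω, f ω ∂μ := by
  refine (integral_sub hf.pos_part hf.neg.pos_part).symm.trans ?_
  simp only [Pi.neg_apply, max_zero_sub_max_neg_zero_eq_self]

end TailIntegrals

/-- For integrable `X` with CDF `F_X` and threshold `θ` with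
`E[(θ − X)₊] > 0`, the Omega ratio satisfies
`(∫_θ^∞ (1 − F_X r) dr) / (∫_{-∞}^θ F_X r dr) = (E[X] − θ) / E[(θ − X)₊] + 1`. -/
theorem omega_ratio_alt_representation
    {Ω : Type*} [MeasurableSpace Ω] (P : Measure Ω) [IsProbabilityMeasure P]
    (X : Ω → ℝ) (hX : Measurable X) (hXi : Integrable X P) (θ : ℝ)
    (hpos : 0 < ∫ ω, max (θ - X ω) 0 ∂P) :
    (∫ r in Set.Ioi θ, (1 - (P {ω | X ω ≤ r}).toReal))
        / (∫ r in Set.Iic θ, (P {ω | X ω ≤ r}).toReal)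
      = ((∫ ω, X ω ∂P) - θ) / (∫ ω, max (θ - X ω) 0 ∂P) + 1 := by
  have hmean : ∫ ω, max (X ω - θ) 0 ∂P - ∫ ω, max (θ - X ω) 0 ∂P = (∫ ω, X ω ∂P) - θ := by
    simpa [neg_sub, integral_sub hXi (integrable_const θ)] using
      integral_max_sub_integral_max_neg P (hXi.sub (integrable_const θ))
  rw [integral_Ioi_one_sub_measure_le_toReal P hX θ, integral_Iic_measure_le_toReal P hX θ,
    ← hmean, sub_div, div_self hpos.ne', sub_add_cancel]
end

section
/- Let X and Y be integrable real random variables with cumulative distribution functions F_X and F_Y satisfying F_X(t) ≤ F_Y(t) for all t ∈ ℝ (X first-order stochastically dominates Y). Let η ∈ ℝ be such that ∫_{-∞}^η F_X(r) dr > 0 and ∫_{-∞}^η F_Y(r) dr > 0. Then Ω_X(η) ≥ Ω_Y(η), where Ω_Z(η) = (∫_η^∞ (1 − F_Z(r)) dr) / (∫_{-∞}^η F_Z(r) dr). That is, first-order stochastic dominance implies Omega-ratio dominance at every threshold. -/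
/-!
First-order dominance makes the gain integrand `1 - F` pointwise larger and the loss integrand `F`
pointwise smaller for `X` than for `Y`, so the Omega ratio can only go up. The one analytic point is
that the gain integral of `X` is finite: by the layer-cake formula it is `𝔼 (X - η)⁺`.
-/

open MeasureTheory Set

section TailIntegral

variable {Ω : Type*} [MeasurableSpace Ω] {μ : Measure Ω} {X : Ω → ℝ}

theorem lintegral_Ioi_measure_lt_eq_lintegral_ofReal_sub (hX : AEMeasurable X μ) (η : ℝ) :
    ∫⁻ r in Ioi η, μ {ω | r < X ω} = ∫⁻ ω, ENNReal.ofReal (X ω - η) ∂μ := by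
  have hshift : ∫⁻ r in Ioi η, μ {ω | r < X ω} = ∫⁻ t in Ioi 0, μ {ω | t + η < X ω} := by
    have := (measurePreserving_add_right volume η).setLIntegral_comp_preimage_emb
      (Homeomorph.addRight η).measurableEmbedding (fun r => μ {ω | r < X ω}) (Ioi η)
    simpa [preimage_add_const_Ioi] using this.symm
  have hlevel : ∀ t ∈ Ioi (0 : ℝ),
      μ {ω | t + η < X ω} = μ {ω | t < max (X ω - η) 0} := fun t ht => by
    simp [lt_sub_iff_add_lt, not_lt.2 (mem_Ioi.1 ht).le]
  rw [hshift, setLIntegral_congr_fun measurableSet_Ioi hlevel,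
    ← lintegral_eq_lintegral_meas_lt (f := fun ω => max (X ω - η) 0) μ
      (.of_forall fun ω => le_max_right _ _) ((hX.sub_const η).max aemeasurable_const)]
  simp

theorem integrableOn_Ioi_measureReal_lt [IsFiniteMeasure μ] (hX : Integrable X μ) (η : ℝ) :
    IntegrableOn (fun r => μ.real {ω | r < X ω}) (Ioi η) := by
  refine integrable_toReal_of_lintegral_ne_top ?_ ?_
  · exact (Antitone.measurable (f := fun r : ℝ => μ {ω | r < X ω})
      fun r s hrs => measure_mono fun ω h => hrs.trans_lt h).aemeasurable
  · rw [lintegral_Ioi_measure_lt_eq_lintegral_ofReal_sub hX.aemeasurable]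
    exact (hX.sub (integrable_const η)).lintegral_lt_top.ne

theorem one_sub_measureReal_le_eq_measureReal_lt [IsProbabilityMeasure μ] (hX : AEMeasurable X μ)
    (r : ℝ) : 1 - μ.real {ω | X ω ≤ r} = μ.real {ω | r < X ω} := by
  have hs : NullMeasurableSet {ω | X ω ≤ r} μ := hX.nullMeasurableSet_preimage measurableSet_Iic
  rw [← probReal_compl_eq_one_sub₀ hs]
  simp only [compl_ofPred, not_le]

theorem integrableOn_Ioi_one_sub_measureReal_le [IsProbabilityMeasure μ] (hX : Integrable X μ)
    (η : ℝ) : IntegrableOn (fun r => 1 - μ.real {ω | X ω ≤ r}) (Ioi η) := by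
  simpa only [one_sub_measureReal_le_eq_measureReal_lt hX.aemeasurable] using
    integrableOn_Ioi_measureReal_lt hX η

end TailIntegral

theorem omega_ratio_dominance_of_fsd_general
    {Ω : Type*} [MeasurableSpace Ω] (P : Measure Ω) [IsProbabilityMeasure P]
    (X Y : Ω → ℝ)
    (hXi : Integrable X P)
    (hfsd : ∀ t : ℝ, P {ω | X ω ≤ t} ≤ P {ω | Y ω ≤ t})
    (η : ℝ)
    (hXpos : 0 < ∫ r in Set.Iic η, (P {ω | X ω ≤ r}).toReal)
    (hYpos : 0 < ∫ r in Set.Iic η, (P {ω | Y ω ≤ r}).toReal) :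
    (∫ r in Set.Ioi η, (1 - (P {ω | Y ω ≤ r}).toReal))
        / (∫ r in Set.Iic η, (P {ω | Y ω ≤ r}).toReal)
      ≤ (∫ r in Set.Ioi η, (1 - (P {ω | X ω ≤ r}).toReal))
        / (∫ r in Set.Iic η, (P {ω | X ω ≤ r}).toReal) := by
  have hcdf (r : ℝ) : P.real {ω | X ω ≤ r} ≤ P.real {ω | Y ω ≤ r} :=
    ENNReal.toReal_mono (measure_ne_top P _) (hfsd r)
  have hsurv_nonneg {Z : Ω → ℝ} (r : ℝ) : 0 ≤ 1 - P.real {ω | Z ω ≤ r} :=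
    sub_nonneg.2 measureReal_le_one
  have hgain : ∫ r in Ioi η, (1 - P.real {ω | Y ω ≤ r})
      ≤ ∫ r in Ioi η, (1 - P.real {ω | X ω ≤ r}) :=
    integral_mono_of_nonneg (.of_forall hsurv_nonneg)
      (integrableOn_Ioi_one_sub_measureReal_le hXi η)
      (.of_forall fun r => sub_le_sub_left (hcdf r) 1)
  have hloss : ∫ r in Iic η, P.real {ω | X ω ≤ r} ≤ ∫ r in Iic η, P.real {ω | Y ω ≤ r} :=
    integral_mono_of_nonneg (.of_forall fun _ => measureReal_nonneg)
      -- a nonzero Bochner integral is not the junk value, so `F_Y` is integrable on `Iic η`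
      (Integrable.of_integral_ne_zero hYpos.ne') (.of_forall hcdf)
  exact div_le_div₀ (setIntegral_nonneg measurableSet_Ioi fun r _ => hsurv_nonneg r)
    hgain hXpos hloss

/-- If `X` first-order stochastically dominates `Y`
(`F_X t ≤ F_Y t` for all `t`) and the loss integrals at threshold `η` are positive,
then the Omega ratios satisfy `Ω_X(η) ≥ Ω_Y(η)`. -/
theorem omega_ratio_dominance_of_fsd
    {Ω : Type*} [MeasurableSpace Ω] (P : Measure Ω) [IsProbabilityMeasure P]
    (X Y : Ω → ℝ) (hX : Measurable X) (hY : Measurable Y)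
    (hXi : Integrable X P) (hYi : Integrable Y P)
    (hfsd : ∀ t : ℝ, P {ω | X ω ≤ t} ≤ P {ω | Y ω ≤ t})
    (η : ℝ)
    (hXpos : 0 < ∫ r in Set.Iic η, (P {ω | X ω ≤ r}).toReal)
    (hYpos : 0 < ∫ r in Set.Iic η, (P {ω | Y ω ≤ r}).toReal) :
    (∫ r in Set.Ioi η, (1 - (P {ω | Y ω ≤ r}).toReal))
        / (∫ r in Set.Iic η, (P {ω | Y ω ≤ r}).toReal)
      ≤ (∫ r in Set.Ioi η, (1 - (P {ω | X ω ≤ r}).toReal))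
        / (∫ r in Set.Iic η, (P {ω | X ω ≤ r}).toReal) :=
  omega_ratio_dominance_of_fsd_general P X Y hXi hfsd η hXpos hYpos
end

section
/- Let X be an integrable real random variable with cumulative distribution function F_X, let α ∈ (0,1), and define g : ℝ → ℝ by g(v) = v + (1/(1 − α)) · E[max(X − v, 0)]. Then g is a convex function and attains its infimum over ℝ at the α-quantile v_α = inf{x ∈ ℝ : F_X(x) ≥ α}; in particular min_{v ∈ ℝ} g(v) = g(v_α). -/
open MeasureTheory

/-- Rockafellar–Uryasev: for integrable `X` and `α ∈ (0,1)`, the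
function `g v = v + (1/(1−α)) · E[(X − v)₊]` is convex on `ℝ` and attains its
infimum at the `α`-quantile `v_α = inf {x | F_X x ≥ α}`; in particular
`min_{v} g v = g v_α`. -/
theorem cvar_rockafellar_uryasev
    {Ω : Type*} [MeasurableSpace Ω] (P : Measure Ω) [IsProbabilityMeasure P]
    (X : Ω → ℝ) (hX : Measurable X) (hXi : Integrable X P)
    (α : ℝ) (hα0 : 0 < α) (hα1 : α < 1)
    (g : ℝ → ℝ) (hg : g = fun v => v + (1 / (1 - α)) * ∫ ω, max (X ω - v) 0 ∂P)
    (vα : ℝ) (hvα : vα = sInf {x : ℝ | α ≤ (P {ω | X ω ≤ x}).toReal}) :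
    ConvexOn ℝ Set.univ g ∧ IsMinOn g Set.univ vα := by
  have h1α : (0:ℝ) < 1 - α := by linarith
  have hcpos : (0:ℝ) < 1 / (1 - α) := by positivity
  have I : ∀ v : ℝ, Integrable (fun ω => max (X ω - v) 0) P :=
    fun v => (hXi.sub (integrable_const v)).pos_part
  have meas : ∀ x : ℝ, MeasurableSet {ω | X ω ≤ x} := fun x => hX measurableSet_Iic
  -- convexity of the positive-part integral
  have hh : ConvexOn ℝ Set.univ (fun v => ∫ ω, max (X ω - v) 0 ∂P) := by
    refine ⟨convex_univ, ?_⟩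
    intro x _ y _ a b ha hb hab
    simp only [smul_eq_mul]
    calc ∫ ω, max (X ω - (a*x + b*y)) 0 ∂P
        ≤ ∫ ω, (a * max (X ω - x) 0 + b * max (X ω - y) 0) ∂P := by
          refine integral_mono (I _) (((I x).const_mul a).add ((I y).const_mul b)) ?_
          intro ω
          show max (X ω - (a*x + b*y)) 0 ≤ a * max (X ω - x) 0 + b * max (X ω - y) 0
          have h1 : X ω - (a*x + b*y) = a*(X ω - x) + b*(X ω - y) := by
            linear_combination (-(X ω)) * hab
          rw [h1]
          refine max_le ?_ (by positivity)
          nlinarith [le_max_left (X ω - x) 0, le_max_right (X ω - x) 0,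
            le_max_left (X ω - y) 0, le_max_right (X ω - y) 0]
        _ = a * ∫ ω, max (X ω - x) 0 ∂P + b * ∫ ω, max (X ω - y) 0 ∂P := by
          rw [integral_add ((I x).const_mul a) ((I y).const_mul b),
            integral_const_mul, integral_const_mul]
  have hconv : ConvexOn ℝ Set.univ g := by
    have h2 := (convexOn_id convex_univ).add (hh.smul hcpos.le)
    have heq : g = fun v => id v + (1/(1-α)) • (∫ ω, max (X ω - v) 0 ∂P) := by
      funext v; simp [hg]
    rw [heq]; exact h2
  refine ⟨hconv, ?_⟩
  set S : Set ℝ := {x : ℝ | α ≤ (P {ω | X ω ≤ x}).toReal} with hSdef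
  have hne : ∀ s : Set Ω, P s ≠ ⊤ := fun s => measure_ne_top P s
  have Fmono : ∀ x y : ℝ, x ≤ y →
      (P {ω | X ω ≤ x}).toReal ≤ (P {ω | X ω ≤ y}).toReal := by
    intro x y hxy
    exact ENNReal.toReal_le_toReal (hne _) (hne _) |>.mpr
      (measure_mono (fun ω hω => le_trans hω hxy))
  -- S is nonempty
  have hS1 : S.Nonempty := by
    have hmon : Monotone (fun n : ℕ => {ω | X ω ≤ (n:ℝ)}) := by
      intro m n hmn ω hω
      simp only [Set.mem_setOf_eq] at hω ⊢
      exact le_trans hω (Nat.cast_le.mpr hmn)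
    have hU : (⋃ n : ℕ, {ω | X ω ≤ (n:ℝ)}) = Set.univ := by
      ext ω; simp only [Set.mem_iUnion, Set.mem_univ, iff_true, Set.mem_setOf_eq]
      exact exists_nat_ge (X ω)
    have ht := tendsto_measure_iUnion_atTop (μ := P) hmon
    rw [hU, measure_univ] at ht
    have hlt : ENNReal.ofReal α < 1 := by
      rw [← ENNReal.ofReal_one]
      exact (ENNReal.ofReal_lt_ofReal_iff_of_nonneg hα0.le).mpr hα1
    obtain ⟨n, hn⟩ := (ht.eventually_const_le hlt).exists
    exact ⟨(n:ℝ), (ENNReal.ofReal_le_iff_le_toReal (hne _)).mp hn⟩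
  -- S is bounded below
  have hS2 : BddBelow S := by
    have hant : Antitone (fun n : ℕ => {ω | X ω ≤ -(n:ℝ)}) := by
      intro m n hmn ω hω
      simp only [Set.mem_setOf_eq] at hω ⊢
      have : (m:ℝ) ≤ (n:ℝ) := Nat.cast_le.mpr hmn
      linarith
    have hI : (⋂ n : ℕ, {ω | X ω ≤ -(n:ℝ)}) = ∅ := by
      ext ω
      simp only [Set.mem_iInter, Set.mem_empty_iff_false, iff_false, not_forall,
        Set.mem_setOf_eq]
      obtain ⟨n, hn⟩ := exists_nat_gt (-(X ω))
      exact ⟨n, not_le.mpr (by linarith)⟩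
    have ht := tendsto_measure_iInter_atTop (μ := P)
      (fun n => (meas _).nullMeasurableSet) hant ⟨0, hne _⟩
    rw [hI, measure_empty] at ht
    have hpos : (0:ENNReal) < ENNReal.ofReal α := ENNReal.ofReal_pos.mpr hα0
    obtain ⟨n, hn⟩ := (ht.eventually_lt_const hpos).exists
    refine ⟨-(n:ℝ), fun s hs => ?_⟩
    by_contra hcon
    push_neg at hcon
    have h2 : (P {ω | X ω ≤ s}).toReal ≤ (P {ω | X ω ≤ -(n:ℝ)}).toReal :=
      Fmono _ _ hcon.le
    have h3 : (P {ω | X ω ≤ -(n:ℝ)}).toReal < α :=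
      (ENNReal.lt_ofReal_iff_toReal_lt (hne _)).mp hn
    have hs' : α ≤ (P {ω | X ω ≤ s}).toReal := hs
    linarith
  -- α ≤ F vα  (right continuity)
  have hFvα : α ≤ (P {ω | X ω ≤ vα}).toReal := by
    have key : ∀ n : ℕ, α ≤ (P {ω | X ω ≤ vα + 1/((n:ℝ)+1)}).toReal := by
      intro n
      have hlt : vα < vα + 1/((n:ℝ)+1) := by
        have : (0:ℝ) < 1/((n:ℝ)+1) := by positivity
        linarith
      rw [hvα] at hlt
      obtain ⟨s, hsS, hslt⟩ := (csInf_lt_iff hS2 hS1).mp hlt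
      have hs' : α ≤ (P {ω | X ω ≤ s}).toReal := hsS
      calc α ≤ (P {ω | X ω ≤ s}).toReal := hs'
        _ ≤ _ := Fmono _ _ (by rw [hvα]; exact hslt.le)
    have hant : Antitone (fun n : ℕ => {ω | X ω ≤ vα + 1/((n:ℝ)+1)}) := by
      intro m n hmn ω hω
      simp only [Set.mem_setOf_eq] at hω ⊢
      have hmn' : (m:ℝ) ≤ (n:ℝ) := Nat.cast_le.mpr hmn
      have : 1/((n:ℝ)+1) ≤ 1/((m:ℝ)+1) :=
        one_div_le_one_div_of_le (by positivity) (by linarith)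
      linarith
    have hI : (⋂ n : ℕ, {ω | X ω ≤ vα + 1/((n:ℝ)+1)}) = {ω | X ω ≤ vα} := by
      ext ω
      simp only [Set.mem_iInter, Set.mem_setOf_eq]
      constructor
      · intro h
        by_contra hcon
        push_neg at hcon
        obtain ⟨n, hn⟩ := exists_nat_gt (1/(X ω - vα))
        have hpos : (0:ℝ) < X ω - vα := by linarith
        have h1 : 1/(X ω - vα) < (n:ℝ) + 1 := by linarith
        have h2 : 1/((n:ℝ)+1) < X ω - vα := by
          rw [div_lt_iff₀ (by positivity)] at h1 ⊢
          nlinarith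
        have := h n
        linarith
      · intro h n
        have : (0:ℝ) < 1/((n:ℝ)+1) := by positivity
        linarith
    have ht := tendsto_measure_iInter_atTop (μ := P)
      (fun n => (meas _).nullMeasurableSet) hant ⟨0, hne _⟩
    rw [hI] at ht
    have hle : ENNReal.ofReal α ≤ P {ω | X ω ≤ vα} := by
      refine ge_of_tendsto ht (Filter.Eventually.of_forall fun n => ?_)
      exact (ENNReal.ofReal_le_iff_le_toReal (hne _)).mpr (key n)
    exact (ENNReal.ofReal_le_iff_le_toReal (hne _)).mp hle
  -- P(X < vα).toReal ≤ α  (left limit)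
  have hFlt : (P {ω | X ω < vα}).toReal ≤ α := by
    have key : ∀ n : ℕ, P {ω | X ω ≤ vα - 1/((n:ℝ)+1)} ≤ ENNReal.ofReal α := by
      intro n
      have hFlt' : (P {ω | X ω ≤ vα - 1/((n:ℝ)+1)}).toReal < α := by
        by_contra hcon
        push_neg at hcon
        have hmem : (vα - 1/((n:ℝ)+1)) ∈ S := hcon
        have h4 := csInf_le hS2 hmem
        rw [← hvα] at h4
        have : (0:ℝ) < 1/((n:ℝ)+1) := by positivity
        linarith
      exact (ENNReal.le_ofReal_iff_toReal_le (hne _) hα0.le).mpr hFlt'.le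
    have hmon : Monotone (fun n : ℕ => {ω | X ω ≤ vα - 1/((n:ℝ)+1)}) := by
      intro m n hmn ω hω
      simp only [Set.mem_setOf_eq] at hω ⊢
      have hmn' : (m:ℝ) ≤ (n:ℝ) := Nat.cast_le.mpr hmn
      have : 1/((n:ℝ)+1) ≤ 1/((m:ℝ)+1) :=
        one_div_le_one_div_of_le (by positivity) (by linarith)
      linarith
    have hU : (⋃ n : ℕ, {ω | X ω ≤ vα - 1/((n:ℝ)+1)}) = {ω | X ω < vα} := by
      ext ω
      simp only [Set.mem_iUnion, Set.mem_setOf_eq]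
      constructor
      · rintro ⟨n, hn⟩
        have : (0:ℝ) < 1/((n:ℝ)+1) := by positivity
        linarith
      · intro h
        obtain ⟨n, hn⟩ := exists_nat_gt (1/(vα - X ω))
        have hpos : (0:ℝ) < vα - X ω := by linarith
        refine ⟨n, ?_⟩
        have h1 : 1/(vα - X ω) < (n:ℝ) + 1 := by linarith
        have h2 : 1/((n:ℝ)+1) < vα - X ω := by
          rw [div_lt_iff₀ (by positivity)] at h1 ⊢
          nlinarith
        linarith
    have ht := tendsto_measure_iUnion_atTop (μ := P) hmon
    rw [hU] at ht
    have hle : P {ω | X ω < vα} ≤ ENNReal.ofReal α :=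
      le_of_tendsto ht (Filter.Eventually.of_forall key)
    exact (ENNReal.le_ofReal_iff_toReal_le (hne _) hα0.le).mp hle
  -- complement identities
  have measlt : MeasurableSet {ω | X ω < vα} := hX measurableSet_Iio
  have hsplit : (P {ω | X ω < vα}).toReal + (P {ω | vα ≤ X ω}).toReal = 1 := by
    have hc : {ω | vα ≤ X ω} = {ω | X ω < vα}ᶜ := by
      ext ω; simp [not_lt]
    rw [hc]
    have h5 := measure_add_measure_compl (μ := P) measlt
    rw [measure_univ] at h5
    rw [← ENNReal.toReal_add (hne _) (hne _), h5, ENNReal.toReal_one]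
  have hsplit2 : (P {ω | X ω ≤ vα}).toReal + (P {ω | vα < X ω}).toReal = 1 := by
    have hc : {ω | vα < X ω} = {ω | X ω ≤ vα}ᶜ := by
      ext ω; simp [not_le]
    rw [hc]
    have h5 := measure_add_measure_compl (μ := P) (meas vα)
    rw [measure_univ] at h5
    rw [← ENNReal.toReal_add (hne _) (hne _), h5, ENNReal.toReal_one]
  -- minimality
  rw [isMinOn_iff]
  intro v _
  simp only [hg]
  rcases le_or_gt v vα with hv | hv
  · -- v ≤ vα
    have measge : MeasurableSet {ω | vα ≤ X ω} := hX measurableSet_Ici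
    have hpt : ∀ ω, max (X ω - vα) 0 +
        Set.indicator {ω | vα ≤ X ω} (fun _ => vα - v) ω ≤ max (X ω - v) 0 := by
      intro ω
      rcases le_or_gt vα (X ω) with h | h
      · rw [Set.indicator_of_mem (show ω ∈ {ω | vα ≤ X ω} from h)]
        rw [max_eq_left (by linarith), max_eq_left (by linarith)]
        linarith
      · rw [Set.indicator_of_notMem (by simp only [Set.mem_setOf_eq, not_le]; exact h)]
        rw [add_zero]
        exact max_le_max (by linarith) le_rfl
    have hint : ∫ ω, max (X ω - vα) 0 ∂P + (vα - v) * (P {ω | vα ≤ X ω}).toReal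
        ≤ ∫ ω, max (X ω - v) 0 ∂P := by
      have h1 := integral_mono
        (f := fun ω => max (X ω - vα) 0 + Set.indicator {ω | vα ≤ X ω} (fun _ => vα - v) ω)
        (g := fun ω => max (X ω - v) 0)
        ((I vα).add ((integrable_const (vα - v)).indicator measge)) (I v) hpt
      rwa [integral_add (I vα) ((integrable_const (vα - v)).indicator measge),
        integral_indicator_const _ measge, smul_eq_mul, mul_comm] at h1
    have hp : 1 - α ≤ (P {ω | vα ≤ X ω}).toReal := by linarith
    have hcp : (1:ℝ) ≤ (1/(1-α)) * (P {ω | vα ≤ X ω}).toReal := by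
      rw [div_mul_eq_mul_div, one_mul, le_div_iff₀ h1α]; linarith
    have h2 : vα - v ≤ (1/(1-α)) * ((vα - v) * (P {ω | vα ≤ X ω}).toReal) := by
      have h5 := mul_le_mul_of_nonneg_right hcp (sub_nonneg.mpr hv)
      calc vα - v = 1 * (vα - v) := by ring
        _ ≤ (1/(1-α)) * (P {ω | vα ≤ X ω}).toReal * (vα - v) := h5
        _ = (1/(1-α)) * ((vα - v) * (P {ω | vα ≤ X ω}).toReal) := by ring
    have hmul := mul_le_mul_of_nonneg_left hint hcpos.le
    have hd : (1/(1-α)) * (∫ ω, max (X ω - vα) 0 ∂P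
          + (vα - v) * (P {ω | vα ≤ X ω}).toReal)
        = (1/(1-α)) * ∫ ω, max (X ω - vα) 0 ∂P
          + (1/(1-α)) * ((vα - v) * (P {ω | vα ≤ X ω}).toReal) := by ring
    linarith
  · -- vα < v
    have measgt : MeasurableSet {ω | vα < X ω} := hX measurableSet_Ioi
    have hpt : ∀ ω, max (X ω - vα) 0
        - Set.indicator {ω | vα < X ω} (fun _ => v - vα) ω ≤ max (X ω - v) 0 := by
      intro ω
      rcases le_or_gt (X ω) vα with h | h
      · rw [Set.indicator_of_notMem (by simp only [Set.mem_setOf_eq, not_lt]; exact h)]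
        rw [max_eq_right (by linarith), sub_zero]
        exact le_max_right _ _
      · rw [Set.indicator_of_mem (show ω ∈ {ω | vα < X ω} from h), max_eq_left (by linarith)]
        rcases le_or_gt (X ω) v with h2 | h2
        · have h6 : max (X ω - v) 0 = 0 := max_eq_right (by linarith)
          rw [h6]; linarith
        · rw [max_eq_left (by linarith)]; linarith
    have hint : ∫ ω, max (X ω - vα) 0 ∂P - (v - vα) * (P {ω | vα < X ω}).toReal
        ≤ ∫ ω, max (X ω - v) 0 ∂P := by
      have h1 := integral_mono
        (f := fun ω => max (X ω - vα) 0 - Set.indicator {ω | vα < X ω} (fun _ => v - vα) ω)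
        (g := fun ω => max (X ω - v) 0)
        ((I vα).sub ((integrable_const (v - vα)).indicator measgt)) (I v) hpt
      rwa [integral_sub (I vα) ((integrable_const (v - vα)).indicator measgt),
        integral_indicator_const _ measgt, smul_eq_mul, mul_comm] at h1
    have hq : (P {ω | vα < X ω}).toReal ≤ 1 - α := by linarith
    have hq0 : (0:ℝ) ≤ (P {ω | vα < X ω}).toReal := ENNReal.toReal_nonneg
    have h2 : (1/(1-α)) * ((v - vα) * (P {ω | vα < X ω}).toReal) ≤ v - vα := by
      have h3 : (1/(1-α)) * (P {ω | vα < X ω}).toReal ≤ 1 := by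
        rw [div_mul_eq_mul_div, one_mul, div_le_one h1α]; linarith
      calc (1/(1-α)) * ((v - vα) * (P {ω | vα < X ω}).toReal)
          = (1/(1-α)) * (P {ω | vα < X ω}).toReal * (v - vα) := by ring
        _ ≤ 1 * (v - vα) := mul_le_mul_of_nonneg_right h3 (by linarith)
        _ = v - vα := by ring
    have hmul := mul_le_mul_of_nonneg_left hint hcpos.le
    have hd : (1/(1-α)) * (∫ ω, max (X ω - vα) 0 ∂P
          - (v - vα) * (P {ω | vα < X ω}).toReal)
        = (1/(1-α)) * ∫ ω, max (X ω - vα) 0 ∂P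
          - (1/(1-α)) * ((v - vα) * (P {ω | vα < X ω}).toReal) := by ring
    linarith
end
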